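/- The function f(x,y) = log(1/|x−y|) is a positive definite kernel on B(0, r_d) × B(0, r_d) ⊂ ℝᵈ × ℝᵈ for some radius r_d > 0; equivalently, for any finite set of points x₁,…,x_n in B(0,r_d) and reals c₁,…,c_n, ∑_{i,j} c_i c_j log(1/|x_i − x_j|) ≥ 0 whenever the points are distinct. In dimension d = 1, one may take r_d = 1/2, since log(1/|x−y|) ≥ 0 there and it agrees with the covariance of an exactly scaling field. -/

import Mathlib

/-!
For `0 < a ≤ 1` one has `log (1 / a) = ∫₀¹ t⁻² (t - a)₊ dt + (1 - a)₊`, so on a set of diameter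
less than one the logarithmic kernel is a positive mixture of triangle kernels `(t - |x - y|)₊`.
Each triangle kernel is a Gram kernel, `(2h - |x - y|)₊ = ∫ 1[|s - x| ≤ h] 1[|s - y| ≤ h] ds`,
so its energy `∬ f(x) f(y) (2h - |x - y|)₊` equals `∫ (∫ f(x) 1[|s - x| ≤ h] dx)² ds ≥ 0`, and
Fubini passes nonnegativity on to the mixture. The mixture is absolutely integrable because
every `t⁻² (t - |u|)₊` has integral one, which bounds `∬ |f(x) f(y)| t⁻² (t - |x - y|)₊` by
`‖f‖∞ ‖f‖₁` uniformly in `t`.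
-/

open MeasureTheory Set Function Metric

section Energy

variable {X T : Type*} [MeasurableSpace X] [MeasurableSpace T] {μ : Measure X} {ν : Measure T}

noncomputable def energy (μ : Measure X) (K : X → X → ℝ) (f : X → ℝ) : ℝ :=
  ∫ x, ∫ y, f x * f y * K x y ∂μ ∂μ

lemma energy_congr {K K' : X → X → ℝ} {f : X → ℝ}
    (h : ∀ x, ∀ᵐ y ∂μ, f x ≠ 0 → f y ≠ 0 → K x y = K' x y) :
    energy μ K f = energy μ K' f := by
  refine integral_congr_ae (Filter.Eventually.of_forall fun x => integral_congr_ae ?_)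
  filter_upwards [h x] with y hxy
  by_cases hx : f x = 0
  · simp [hx]
  by_cases hy : f y = 0
  · simp [hy]
  rw [hxy hx hy]

lemma energy_const_mul (c : ℝ) (K : X → X → ℝ) (f : X → ℝ) :
    energy μ (fun x y => c * K x y) f = c * energy μ K f := by
  simp only [energy, ← integral_const_mul]
  congr 1; ext x; congr 1; ext y; ring

lemma energy_mul_self (φ : X → ℝ) (f : X → ℝ) :
    energy μ (fun x y => φ x * φ y) f = (∫ x, f x * φ x ∂μ) ^ 2 := by
  calc energy μ (fun x y => φ x * φ y) f
      = ∫ x, (f x * φ x) * ∫ y, f y * φ y ∂μ ∂μ := by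
        simp only [energy, ← integral_const_mul]
        congr 1; ext x; congr 1; ext y; ring
    _ = _ := by rw [integral_mul_const, sq]

lemma MeasureTheory.AEStronglyMeasurable.mul_comp_fst_fst_snd {f : X → ℝ}
    (hf : AEStronglyMeasurable f μ) :
    AEStronglyMeasurable (fun q : (X × X) × T => f q.1.1 * f q.1.2) ((μ.prod μ).prod ν) :=
  (hf.comp_fst.comp_fst).mul (hf.comp_snd.comp_fst)

variable [SFinite ν]

lemma integrable_mixture {K : T → X → X → ℝ} {f : X → ℝ}
    (h : Integrable (fun q : (X × X) × T => f q.1.1 * f q.1.2 * K q.2 q.1.1 q.1.2)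
      ((μ.prod μ).prod ν)) :
    Integrable (fun p : X × X => f p.1 * f p.2 * ∫ t, K t p.1 p.2 ∂ν) (μ.prod μ) := by
  simpa only [integral_const_mul] using h.integral_prod_left

variable [SFinite μ]

lemma energy_eq_integral_prod {K : X → X → ℝ} {f : X → ℝ}
    (h : Integrable (fun p : X × X => f p.1 * f p.2 * K p.1 p.2) (μ.prod μ)) :
    energy μ K f = ∫ p, f p.1 * f p.2 * K p.1 p.2 ∂μ.prod μ :=
  (integral_prod _ h).symm

lemma energy_add {K₁ K₂ : X → X → ℝ} {f : X → ℝ}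
    (h₁ : Integrable (fun p : X × X => f p.1 * f p.2 * K₁ p.1 p.2) (μ.prod μ))
    (h₂ : Integrable (fun p : X × X => f p.1 * f p.2 * K₂ p.1 p.2) (μ.prod μ)) :
    energy μ (fun x y => K₁ x y + K₂ x y) f = energy μ K₁ f + energy μ K₂ f := by
  rw [energy_eq_integral_prod h₁, energy_eq_integral_prod h₂, ← integral_add h₁ h₂,
    energy_eq_integral_prod (by simp only [mul_add]; exact h₁.add h₂)]
  simp only [mul_add]

lemma energy_mixture_nonneg {K : T → X → X → ℝ} {f : X → ℝ}
    (h : Integrable (fun q : (X × X) × T => f q.1.1 * f q.1.2 * K q.2 q.1.1 q.1.2)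
      ((μ.prod μ).prod ν))
    (hK : ∀ᵐ t ∂ν, 0 ≤ energy μ (K t) f) :
    0 ≤ energy μ (fun x y => ∫ t, K t x y ∂ν) f := by
  rw [energy_eq_integral_prod (integrable_mixture h)]
  simp_rw [← integral_const_mul]
  have hswap :=
    integral_integral_swap (f := fun (p : X × X) (t : T) => f p.1 * f p.2 * K t p.1 p.2) h
  beta_reduce at hswap
  rw [hswap]
  refine integral_nonneg_of_ae ?_
  filter_upwards [hK, h.prod_left_ae] with t ht hint
  rwa [← energy_eq_integral_prod hint]

lemma energy_gram_nonneg {φ : T → X → ℝ} {f : X → ℝ}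
    (h : Integrable (fun q : (X × X) × T => f q.1.1 * f q.1.2 * (φ q.2 q.1.1 * φ q.2 q.1.2))
      ((μ.prod μ).prod ν)) :
    0 ≤ energy μ (fun x y => ∫ t, φ t x * φ t y ∂ν) f :=
  energy_mixture_nonneg (K := fun t x y => φ t x * φ t y) h
    (Filter.Eventually.of_forall fun t => by rw [energy_mul_self]; positivity)

end Energy

lemma abs_max_sub_abs_le (t u : ℝ) : |max (t - |u|) 0| ≤ |t| := by
  rw [abs_of_nonneg (le_max_right _ _)]
  exact max_le (by linarith [abs_nonneg u, le_abs_self t]) (abs_nonneg t)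

lemma integrable_max_sub_abs (t : ℝ) : Integrable fun u : ℝ => max (t - |u|) 0 := by
  refine (by fun_prop : Continuous _).integrable_of_hasCompactSupport
    (HasCompactSupport.intro (isCompact_closedBall 0 t) fun u hu => ?_)
  rw [mem_closedBall, dist_zero_right, Real.norm_eq_abs, not_le] at hu
  exact max_eq_right (by linarith)

lemma integral_max_sub_abs {t : ℝ} (ht : 0 ≤ t) : ∫ u, max (t - |u|) 0 = t ^ 2 := by
  have hsupp : EqOn (fun u : ℝ => max (t - u) 0) ((Iic t).indicator fun u => t - u) (Ioi 0) := by
    intro u _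
    dsimp only
    by_cases hut : u ≤ t
    · rw [indicator_of_mem (mem_Iic.2 hut), max_eq_left (sub_nonneg.2 hut)]
    · rw [indicator_of_notMem (mt mem_Iic.1 hut), max_eq_right (by linarith [not_le.1 hut])]
  rw [integral_comp_abs (f := fun u => max (t - u) 0),
    setIntegral_congr_fun measurableSet_Ioi hsupp, setIntegral_indicator measurableSet_Iic,
    Ioi_inter_Iic, ← intervalIntegral.integral_of_le ht,
    intervalIntegral.integral_sub intervalIntegrable_const intervalIntegral.intervalIntegrable_id,
    intervalIntegral.integral_const, integral_id, smul_eq_mul]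
  ring

lemma integrable_mul_mul_comp_sub_of_bdd {f g k : ℝ → ℝ} (hf : Integrable f)
    (hg : Integrable g) (hk : Continuous k) {c : ℝ} (hc : ∀ u, |k u| ≤ c) :
    Integrable (fun p : ℝ × ℝ => f p.1 * g p.2 * k (p.1 - p.2)) (volume.prod volume) :=
  (hf.mul_prod hg).mul_bdd (by fun_prop) (Filter.Eventually.of_forall fun _ => hc _)

lemma integrable_mul_comp_sub {g k : ℝ → ℝ} (hg : Integrable g) (hk : Integrable k) :
    Integrable (fun p : ℝ × ℝ => g p.2 * k (p.1 - p.2)) (volume.prod volume) := by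
  simpa only [ContinuousLinearMap.mul_apply'] using
    hg.convolution_integrand (ContinuousLinearMap.mul ℝ ℝ) hk

lemma integral_mul_comp_sub {g k : ℝ → ℝ} (hg : Integrable g) (hk : Integrable k) :
    ∫ p : ℝ × ℝ, g p.2 * k (p.1 - p.2) ∂(volume.prod volume) = (∫ x, g x) * ∫ x, k x := by
  rw [integral_prod_symm _ (integrable_mul_comp_sub hg hk)]
  simp only [integral_const_mul, integral_sub_right_eq_self, integral_mul_const]

lemma indicator_closedBall_mul_indicator_closedBall (h s x y : ℝ) :
    (closedBall s h).indicator (1 : ℝ → ℝ) x * (closedBall s h).indicator 1 y =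
      (closedBall x h ∩ closedBall y h).indicator 1 s := by
  rw [inter_indicator_one, Pi.mul_apply]
  simp only [indicator, Pi.one_apply, mem_closedBall, dist_comm x, dist_comm y]

lemma volume_real_closedBall_inter_closedBall (h x y : ℝ) :
    volume.real (closedBall x h ∩ closedBall y h) = max (2 * h - |x - y|) 0 := by
  rw [Real.closedBall_eq_Icc, Real.closedBall_eq_Icc, Icc_inter_Icc, Real.volume_real_Icc,
    min_add_add_right, max_sub_sub_right, ← max_sub_min_eq_abs' x y]
  ring_nf

lemma integral_indicator_closedBall_mul (h x y : ℝ) :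
    ∫ s, (closedBall s h).indicator (1 : ℝ → ℝ) x * (closedBall s h).indicator 1 y =
      max (2 * h - |x - y|) 0 := by
  simp only [indicator_closedBall_mul_indicator_closedBall]
  rw [integral_indicator_one (measurableSet_closedBall.inter measurableSet_closedBall),
    volume_real_closedBall_inter_closedBall]

lemma measurable_indicator_closedBall (h : ℝ) :
    Measurable (fun p : ℝ × ℝ => (closedBall p.2 h).indicator (1 : ℝ → ℝ) p.1) := by
  simp only [indicator, mem_closedBall, Pi.one_apply]
  exact Measurable.ite (measurableSet_le (by fun_prop) measurable_const) measurable_const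
    measurable_const

lemma integrable_gram_indicator_closedBall {f : ℝ → ℝ} (hf : Integrable f) (h : ℝ) :
    Integrable (fun q : (ℝ × ℝ) × ℝ => f q.1.1 * f q.1.2 *
      ((closedBall q.2 h).indicator 1 q.1.1 * (closedBall q.2 h).indicator 1 q.1.2))
      ((volume.prod volume).prod volume) := by
  have hφ := measurable_indicator_closedBall h
  have hm : AEStronglyMeasurable (fun q : (ℝ × ℝ) × ℝ => f q.1.1 * f q.1.2 *
      ((closedBall q.2 h).indicator (1 : ℝ → ℝ) q.1.1 * (closedBall q.2 h).indicator 1 q.1.2))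
      ((volume.prod volume).prod volume) :=
    hf.aestronglyMeasurable.mul_comp_fst_fst_snd.mul
      ((hφ.comp (measurable_fst.fst.prodMk measurable_snd)).mul
        (hφ.comp (measurable_fst.snd.prodMk measurable_snd))).aestronglyMeasurable
  have hnorm : ∀ p : ℝ × ℝ, ∫ s, ‖f p.1 * f p.2 *
      ((closedBall s h).indicator (1 : ℝ → ℝ) p.1 * (closedBall s h).indicator 1 p.2)‖ =
        ‖f p.1‖ * ‖f p.2‖ * max (2 * h - |p.1 - p.2|) 0 := fun p => by
    simp only [indicator_closedBall_mul_indicator_closedBall, norm_mul,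
      norm_indicator_eq_indicator_norm, Pi.one_apply, norm_one]
    rw [integral_const_mul, integral_indicator_const _ (measurableSet_closedBall.inter
      measurableSet_closedBall), volume_real_closedBall_inter_closedBall, smul_eq_mul, mul_one]
  refine (integrable_prod_iff hm).2 ⟨Filter.Eventually.of_forall fun p => ?_, ?_⟩
  · simp only [indicator_closedBall_mul_indicator_closedBall]
    exact ((integrableOn_const ((measure_mono inter_subset_left).trans_lt
      measure_closedBall_lt_top).ne).integrable_indicator
      (measurableSet_closedBall.inter measurableSet_closedBall)).const_mul _
  · simp only [hnorm]
    exact integrable_mul_mul_comp_sub_of_bdd hf.norm hf.norm (by fun_prop)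
      (abs_max_sub_abs_le (2 * h))

lemma energy_triangle_nonneg {f : ℝ → ℝ} (hf : Integrable f) (t : ℝ) :
    0 ≤ energy volume (fun x y => max (t - |x - y|) 0) f := by
  have hK : (fun x y : ℝ => max (t - |x - y|) 0) = fun x y => ∫ s,
      (closedBall s (t / 2)).indicator 1 x * (closedBall s (t / 2)).indicator 1 y := by
    ext x y
    rw [integral_indicator_closedBall_mul, mul_div_cancel₀ _ two_ne_zero]
  rw [hK]
  exact energy_gram_nonneg (integrable_gram_indicator_closedBall hf _)

lemma integral_inv_sq_mul_sub {a : ℝ} (ha : 0 < a) (ha1 : a ≤ 1) :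
    ∫ t in a..1, (t ^ 2)⁻¹ * (t - a) = a - 1 - Real.log a := by
  have hpos : ∀ t ∈ uIcc a 1, 0 < t := fun t ht => ha.trans_le (uIcc_of_le ha1 ▸ ht).1
  have hderiv : ∀ t ∈ uIcc a 1,
      HasDerivAt (fun t => Real.log t + a * t⁻¹) ((t ^ 2)⁻¹ * (t - a)) t := by
    intro t ht
    have ht0 := (hpos t ht).ne'
    refine ((Real.hasDerivAt_log ht0).add ((hasDerivAt_inv ht0).const_mul a)).congr_deriv ?_
    field_simp
    ring
  have hint : IntervalIntegrable (fun t => (t ^ 2)⁻¹ * (t - a)) volume a 1 :=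
    (ContinuousOn.mul (continuousOn_inv₀.comp' (by fun_prop) fun t ht => by
      simpa using (hpos t ht).ne') (by fun_prop)).intervalIntegrable
  rw [intervalIntegral.integral_eq_sub_of_hasDerivAt hderiv hint, Real.log_one, inv_one,
    mul_inv_cancel₀ ha.ne']
  ring

lemma log_one_div_eq_integral_triangle {a : ℝ} (ha : 0 < a) (ha1 : a ≤ 1) :
    Real.log (1 / a) = (∫ t in Ioo 0 1, (t ^ 2)⁻¹ * max (t - a) 0) + max (1 - a) 0 := by
  have hsupp : EqOn (fun t : ℝ => (t ^ 2)⁻¹ * max (t - a) 0)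
      ((Ioi a).indicator fun t => (t ^ 2)⁻¹ * (t - a)) (Ioo 0 1) := by
    intro t _
    dsimp only
    by_cases hta : a < t
    · rw [indicator_of_mem (mem_Ioi.2 hta), max_eq_left (sub_nonneg.2 hta.le)]
    · rw [indicator_of_notMem (mt mem_Ioi.1 hta), max_eq_right (sub_nonpos.2 (not_lt.1 hta)),
        mul_zero]
  rw [setIntegral_congr_fun measurableSet_Ioo hsupp, setIntegral_indicator measurableSet_Ioi,
    Ioo_inter_Ioi, max_eq_right ha.le, ← integral_Ioc_eq_integral_Ioo,
    ← intervalIntegral.integral_of_le ha1, integral_inv_sq_mul_sub ha ha1,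
    max_eq_left (sub_nonneg.2 ha1), one_div, Real.log_inv]
  ring

lemma integral_norm_scaled_triangle_le {f : ℝ → ℝ} (hf : Integrable f) {C : ℝ}
    (hC : ∀ x, |f x| ≤ C) {t : ℝ} (ht : 0 < t) :
    ∫ p : ℝ × ℝ, ‖f p.1 * f p.2 * ((t ^ 2)⁻¹ * max (t - |p.1 - p.2|) 0)‖ ∂(volume.prod volume)
      ≤ C * ∫ x, |f x| := by
  set k : ℝ → ℝ := fun u => (t ^ 2)⁻¹ * max (t - |u|) 0
  have hk0 : ∀ u, 0 ≤ k u := fun u => by positivity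
  have hk : Integrable k := (integrable_max_sub_abs t).const_mul _
  have hk1 : ∫ u, k u = 1 := by
    rw [integral_const_mul, integral_max_sub_abs ht.le, inv_mul_cancel₀ (by positivity)]
  calc ∫ p : ℝ × ℝ, ‖f p.1 * f p.2 * k (p.1 - p.2)‖ ∂(volume.prod volume)
      ≤ ∫ p : ℝ × ℝ, C * (|f p.2| * k (p.1 - p.2)) ∂(volume.prod volume) := by
        refine integral_mono_of_nonneg (Filter.Eventually.of_forall fun _ => norm_nonneg _)
          ((integrable_mul_comp_sub hf.abs hk).const_mul C)
          (Filter.Eventually.of_forall fun p => ?_)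
        dsimp only
        rw [norm_mul, norm_mul, Real.norm_of_nonneg (hk0 _), Real.norm_eq_abs,
          Real.norm_eq_abs, mul_assoc]
        exact mul_le_mul_of_nonneg_right (hC _) (by positivity)
    _ = C * ∫ x, |f x| := by
        rw [integral_const_mul, integral_mul_comp_sub hf.abs hk, hk1, mul_one]

lemma integrable_mixture_triangle {f : ℝ → ℝ} (hf : Integrable f) {C : ℝ}
    (hC : ∀ x, |f x| ≤ C) :
    Integrable (fun q : (ℝ × ℝ) × ℝ => f q.1.1 * f q.1.2 *
      ((q.2 ^ 2)⁻¹ * max (q.2 - |q.1.1 - q.1.2|) 0))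
      ((volume.prod volume).prod (volume.restrict (Ioo 0 1))) := by
  have hm : AEStronglyMeasurable (fun q : (ℝ × ℝ) × ℝ => f q.1.1 * f q.1.2 *
      ((q.2 ^ 2)⁻¹ * max (q.2 - |q.1.1 - q.1.2|) 0))
      ((volume.prod volume).prod (volume.restrict (Ioo 0 1))) :=
    hf.aestronglyMeasurable.mul_comp_fst_fst_snd.mul
      (by fun_prop : Measurable fun q : (ℝ × ℝ) × ℝ =>
        (q.2 ^ 2)⁻¹ * max (q.2 - |q.1.1 - q.1.2|) 0).aestronglyMeasurable
  refine (integrable_prod_iff' hm).2 ⟨Filter.Eventually.of_forall fun t => ?_, ?_⟩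
  · refine integrable_mul_mul_comp_sub_of_bdd hf hf
      (k := fun u => (t ^ 2)⁻¹ * max (t - |u|) 0) (by fun_prop) (c := |(t ^ 2)⁻¹| * |t|)
      fun u => ?_
    rw [abs_mul]
    exact mul_le_mul_of_nonneg_left (abs_max_sub_abs_le t u) (abs_nonneg _)
  · refine IntegrableOn.of_bound measure_Ioo_lt_top hm.prod_swap.norm.integral_prod_right'
      (C * ∫ x, |f x|) ?_
    filter_upwards [ae_restrict_mem measurableSet_Ioo] with t ht
    rw [Real.norm_of_nonneg (integral_nonneg fun _ => norm_nonneg _)]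
    exact integral_norm_scaled_triangle_le hf hC ht.1

lemma abs_sub_lt_one_of_mem_ball {x y : ℝ} (hx : x ∈ ball 0 (1 / 2))
    (hy : y ∈ ball 0 (1 / 2)) : |x - y| < 1 := by
  rw [← Real.dist_eq]
  linarith [dist_triangle_right x y 0, mem_ball.1 hx, mem_ball.1 hy]

theorem energy_log_nonneg {f : ℝ → ℝ} (hf : Integrable f) {C : ℝ} (hC : ∀ x, |f x| ≤ C)
    (hsupp : support f ⊆ ball 0 (1 / 2)) :
    0 ≤ energy volume (fun x y => Real.log (1 / |x - y|)) f := by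
  have hrepr : energy volume (fun x y => Real.log (1 / |x - y|)) f =
      energy volume (fun x y => (∫ t in Ioo 0 1, (t ^ 2)⁻¹ * max (t - |x - y|) 0) +
        max (1 - |x - y|) 0) f := by
    refine energy_congr fun x => ?_
    filter_upwards [compl_mem_ae_iff.2 (measure_singleton x)] with y hyx hx hy
    exact log_one_div_eq_integral_triangle (abs_pos.2 (sub_ne_zero.2 (Ne.symm hyx)))
      (abs_sub_lt_one_of_mem_ball (hsupp hx) (hsupp hy)).le
  have hmix := integrable_mixture_triangle hf hC
  rw [hrepr, energy_add
    (integrable_mixture (K := fun t x y => (t ^ 2)⁻¹ * max (t - |x - y|) 0) hmix)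
    (integrable_mul_mul_comp_sub_of_bdd hf hf (by fun_prop) (abs_max_sub_abs_le 1))]
  refine add_nonneg (energy_mixture_nonneg hmix (Filter.Eventually.of_forall fun t => ?_))
    (energy_triangle_nonneg hf 1)
  rw [energy_const_mul]
  exact mul_nonneg (by positivity) (energy_triangle_nonneg hf t)

/-- In dimension `d = 1` one may take `r_d = 1/2`: on `B(0, 1/2)` the kernel
`log(1/|x-y|)` is nonnegative off the diagonal and positive definite, in the sense that
`∬ f(x) f(y) log(1/|x-y|) dx dy ≥ 0` for every continuous `f` supported in `B(0, 1/2)`. -/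
theorem stmt14 :
    ∃ r : ℝ, 0 < r ∧ r = 1 / 2 ∧
      (∀ x y : ℝ, x ∈ Metric.ball (0 : ℝ) r → y ∈ Metric.ball (0 : ℝ) r → x ≠ y →
        0 ≤ Real.log (1 / |x - y|)) ∧
      (∀ f : ℝ → ℝ, Continuous f → tsupport f ⊆ Metric.ball (0 : ℝ) r →
        0 ≤ ∫ x : ℝ, ∫ y : ℝ, f x * f y * Real.log (1 / |x - y|)) := by
  refine ⟨1 / 2, by norm_num, rfl, fun x y hx hy _ => ?_, fun f hf hsupp => ?_⟩
  · rw [one_div, Real.log_inv, neg_nonneg]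
    exact Real.log_nonpos (abs_nonneg _) (abs_sub_lt_one_of_mem_ball hx hy).le
  · have hcs : HasCompactSupport f :=
      isCompact_of_isClosed_isBounded (isClosed_tsupport f) (isBounded_ball.subset hsupp)
    obtain ⟨C, hC⟩ := hcs.exists_bound_of_continuous hf
    exact energy_log_nonneg (hf.integrable_of_hasCompactSupport hcs) hC
      ((subset_tsupport f).trans hsupp)
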